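/- arXiv:1910.11957 — 3 statements merged into one kernel-verified Lean document; each statement's English description precedes it below -/
import Mathlib

section
/- Let Φ_λ(x) = Σ_{i=1}^n cosh(λ x_i) with λ > 0. For any r, v ∈ ℝ^n with ‖v‖_∞ ≤ 1/λ, we have Φ_λ(r + v) ≤ Φ_λ(r) + ⟨∇Φ_λ(r), v⟩ + 2 Σ_{i=1}^n λ² cosh(λ r_i) v_i². -/
open Finset Real

lemma cosh_add_bound (a b : ℝ) (hb : |b| ≤ 1) :
    Real.cosh (a + b) ≤ Real.cosh a + Real.sinh a * b + 2 * (Real.cosh a * b ^ 2) := by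
  have h1 : |Real.exp b - 1 - b| ≤ b ^ 2 := Real.abs_exp_sub_one_sub_id_le hb
  have h2 : |Real.exp (-b) - 1 - (-b)| ≤ (-b) ^ 2 :=
    Real.abs_exp_sub_one_sub_id_le (by simpa using hb)
  have hcb : Real.cosh b ≤ 1 + b ^ 2 := by
    rw [Real.cosh_eq]
    have := abs_le.1 h1
    have := abs_le.1 h2
    nlinarith
  have hsb : |Real.sinh b - b| ≤ b ^ 2 := by
    rw [Real.sinh_eq]
    have := abs_le.1 h1
    have := abs_le.1 h2
    rw [abs_le]
    constructor <;> nlinarith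
  have hsinh : Real.sinh a * Real.sinh b ≤ Real.sinh a * b + Real.cosh a * b ^ 2 := by
    have h3 : Real.sinh a * (Real.sinh b - b) ≤ |Real.sinh a| * b ^ 2 := by
      calc Real.sinh a * (Real.sinh b - b) ≤ |Real.sinh a * (Real.sinh b - b)| := le_abs_self _
        _ = |Real.sinh a| * |Real.sinh b - b| := abs_mul _ _
        _ ≤ |Real.sinh a| * b ^ 2 := by
            exact mul_le_mul_of_nonneg_left hsb (abs_nonneg _)
    have h4 : |Real.sinh a| ≤ Real.cosh a := by
      rw [Real.abs_sinh, ← Real.cosh_abs]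
      have := Real.exp_pos (-|a|)
      rw [Real.sinh_eq, Real.cosh_eq]
      linarith
    nlinarith [sq_nonneg b]
  have hccosh : Real.cosh a * Real.cosh b ≤ Real.cosh a + Real.cosh a * b ^ 2 := by
    have hca : 0 < Real.cosh a := Real.cosh_pos a
    nlinarith
  rw [Real.cosh_add]
  nlinarith

theorem stmt7 (n : ℕ) (lam : ℝ) (hlam : 0 < lam) (r v : Fin n → ℝ)
    (hv : ∀ i, |v i| ≤ 1 / lam) :
    (∑ i, Real.cosh (lam * (r i + v i))) ≤
      (∑ i, Real.cosh (lam * r i)) + (∑ i, lam * Real.sinh (lam * r i) * v i) +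
        2 * ∑ i, lam ^ 2 * Real.cosh (lam * r i) * v i ^ 2 := by
  rw [← Finset.sum_add_distrib, Finset.mul_sum, ← Finset.sum_add_distrib]
  apply Finset.sum_le_sum
  intro i _
  have hb : |lam * v i| ≤ 1 := by
    rw [abs_mul, abs_of_pos hlam]
    calc lam * |v i| ≤ lam * (1 / lam) := by
          exact mul_le_mul_of_nonneg_left (hv i) hlam.le
      _ = 1 := by field_simp
  have := cosh_add_bound (lam * r i) (lam * v i) hb
  rw [mul_add] at *
  nlinarith [this]
end

section
/- Let (x^k)_{k≥1} be a sequence of vectors in ℝ^n with positive entries such that ‖(x^{k+1} − x^k)/x^k‖₂ ≤ C < 1/2 for all k (entrywise division). Then for any ε ∈ (0,1), the number of indices i such that x^k_i > (1+ε) x^1_i or x^k_i < (1−ε) x^1_i is at most O((Ck/ε)²); concretely, if T is the number of such indices, then T · log(1+ε) ≤ 2√(T+1) · kC. -/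
/-!
Taking logarithms turns the multiplicative drift into an additive one: each step moves the
vector `log (x k / x 0)` by at most `2C` in `ℓ²`, because `|log y| ≤ 2 |y - 1|` for `y ≥ 1/2`,
so after `k` steps its `ℓ²` norm is at most `2kC`. Every one of the `T` indices that moved by
more than a factor `1 ± ε` contributes at least `log (1 + ε)` to the `ℓ¹` norm of this vector
restricted to those indices, and that `ℓ¹` norm is at most `√T` times the `ℓ²` norm.
-/

open Finset Real

theorem abs_log_le_two_mul_abs_sub_one {y : ℝ} (hy : 1 / 2 ≤ y) : |log y| ≤ 2 * |y - 1| := by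
  have hy0 : 0 < y := by linarith
  refine abs_le.2 ⟨?_, (log_le_sub_one_of_pos hy0).trans ?_⟩
  · rcases le_or_gt 1 y with h1 | h1
    · linarith [log_nonneg h1, abs_nonneg (y - 1)]
    · have : 2 * (y - 1) ≤ 1 - y⁻¹ := by
        rw [← sub_nonneg, show 1 - y⁻¹ - 2 * (y - 1) = (1 - y) * (2 * y - 1) / y by
          field_simp; ring]
        exact div_nonneg (mul_nonneg (by linarith) (by linarith)) hy0.le
      linarith [one_sub_inv_le_log_of_pos hy0, abs_of_neg (sub_neg.2 h1)]
  · linarith [le_abs_self (y - 1), abs_nonneg (y - 1)]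

theorem log_one_add_le_abs_log {ε r : ℝ} (hε : -1 < ε) (hr : 0 < r)
    (h : 1 + ε < r ∨ r < 1 - ε) : log (1 + ε) ≤ |log r| := by
  rcases h with h | h
  · exact (log_le_log (by linarith) h.le).trans (le_abs_self _)
  · have hinv : r ≤ (1 + ε)⁻¹ := by
      refine h.le.trans ?_
      rw [← one_div, le_div_iff₀ (by linarith)]
      nlinarith [sq_nonneg ε]
    calc log (1 + ε) ≤ log r⁻¹ :=
          log_le_log (by linarith) ((le_inv_comm₀ (by linarith) hr).2 hinv)
      _ ≤ |log r| := by rw [log_inv]; exact neg_le_abs _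

theorem card_mul_le_sqrt_card_mul_norm {ι : Type*} [Fintype ι] (v : EuclideanSpace ℝ ι)
    (s : Finset ι) {L : ℝ} (h : ∀ i ∈ s, L ≤ |v i|) : #s * L ≤ √(#s : ℝ) * ‖v‖ := by
  have hsq : (∑ i ∈ s, |v i|) ^ 2 ≤ (√(#s : ℝ) * ‖v‖) ^ 2 := by
    rw [mul_pow, sq_sqrt (Nat.cast_nonneg _), EuclideanSpace.real_norm_sq_eq]
    calc (∑ i ∈ s, |v i|) ^ 2 ≤ #s * ∑ i ∈ s, |v i| ^ 2 := sq_sum_le_card_mul_sum_sq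
      _ ≤ #s * ∑ i, v i ^ 2 := by
          simp_rw [sq_abs]
          gcongr
          exact subset_univ s
  calc #s * L = ∑ i ∈ s, L := by rw [sum_const, nsmul_eq_mul]
    _ ≤ ∑ i ∈ s, |v i| := sum_le_sum h
    _ ≤ √(#s : ℝ) * ‖v‖ := (pow_le_pow_iff_left₀ (by positivity) (by positivity) two_ne_zero).1 hsq

noncomputable def logRatio {ι : Type*} (a b : ι → ℝ) : EuclideanSpace ℝ ι :=
  WithLp.toLp 2 fun i => log (a i / b i)

section logRatio

variable {ι : Type*}

@[simp]
theorem logRatio_apply (a b : ι → ℝ) (i : ι) : logRatio a b i = log (a i / b i) := rfl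

@[simp]
theorem logRatio_self (a : ι → ℝ) : logRatio a a = 0 := by
  ext i
  simp

theorem logRatio_add_logRatio {a b c : ι → ℝ} (ha : ∀ i, a i ≠ 0) (hb : ∀ i, b i ≠ 0)
    (hc : ∀ i, c i ≠ 0) : logRatio a b + logRatio b c = logRatio a c := by
  ext i
  simp only [PiLp.add_apply, logRatio_apply, log_div (ha i) (hb i), log_div (hb i) (hc i),
    log_div (ha i) (hc i)]
  ring

theorem norm_logRatio_le [Fintype ι] {a b : ι → ℝ} (hb : ∀ i, b i ≠ 0)
    (h : √(∑ i, ((a i - b i) / b i) ^ 2) ≤ 1 / 2) :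
    ‖logRatio a b‖ ≤ 2 * √(∑ i, ((a i - b i) / b i) ^ 2) := by
  have hcoord (i : ι) : |log (a i / b i)| ≤ |2 * ((a i - b i) / b i)| := by
    have hd : |(a i - b i) / b i| ≤ 1 / 2 := (abs_le_sqrt (single_le_sum
      (f := fun j => ((a j - b j) / b j) ^ 2) (fun j _ => sq_nonneg _) (mem_univ i))).trans h
    rw [sub_div, div_self (hb i)] at hd ⊢
    rw [abs_mul, abs_two]
    exact abs_log_le_two_mul_abs_sub_one (by linarith [neg_abs_le (a i / b i - 1)])
  calc ‖logRatio a b‖ ≤ √(∑ i, (2 * ((a i - b i) / b i)) ^ 2) := by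
        rw [EuclideanSpace.norm_eq]
        refine sqrt_le_sqrt (sum_le_sum fun i _ => ?_)
        rw [logRatio_apply, norm_eq_abs, sq_abs]
        exact sq_le_sq.2 (hcoord i)
    _ = 2 * √(∑ i, ((a i - b i) / b i) ^ 2) := by
        simp_rw [mul_pow, ← mul_sum, sqrt_mul (sq_nonneg 2), sqrt_sq zero_le_two]

theorem norm_logRatio_le_mul_of_steps [Fintype ι] {x : ℕ → ι → ℝ} (hx : ∀ k i, x k i ≠ 0) {D : ℝ}
    (hD : ∀ k, ‖logRatio (x (k + 1)) (x k)‖ ≤ D) (k : ℕ) :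
    ‖logRatio (x k) (x 0)‖ ≤ k * D := by
  induction k with
  | zero => simp
  | succ k ih =>
    rw [← logRatio_add_logRatio (hx (k + 1)) (hx k) (hx 0)]
    push_cast
    linarith [norm_add_le (logRatio (x (k + 1)) (x k)) (logRatio (x k) (x 0)), hD k]

end logRatio

open Classical in
theorem stmt10_general (n : ℕ) (x : ℕ → Fin n → ℝ) (C : ℝ) (hC : C < 1 / 2)
    (hpos : ∀ k i, 0 < x k i)
    (h : ∀ k, Real.sqrt (∑ i, ((x (k + 1) i - x k i) / x k i) ^ 2) ≤ C)
    (ε : ℝ) (hε : 0 < ε) (k : ℕ) :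
    (Finset.univ.filter
        (fun i => x k i > (1 + ε) * x 0 i ∨ x k i < (1 - ε) * x 0 i)).card *
        Real.log (1 + ε) ≤
      2 * Real.sqrt ((Finset.univ.filter
        (fun i => x k i > (1 + ε) * x 0 i ∨ x k i < (1 - ε) * x 0 i)).card + 1) *
        k * C := by
  set S := univ.filter fun i => x k i > (1 + ε) * x 0 i ∨ x k i < (1 - ε) * x 0 i
  have hx : ∀ k i, x k i ≠ 0 := fun k i => (hpos k i).ne'
  have hstep (m : ℕ) : ‖logRatio (x (m + 1)) (x m)‖ ≤ 2 * C :=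
    (norm_logRatio_le (hx m) ((h m).trans hC.le)).trans
      (mul_le_mul_of_nonneg_left (h m) zero_le_two)
  have hdrift : ‖logRatio (x k) (x 0)‖ ≤ k * (2 * C) := norm_logRatio_le_mul_of_steps hx hstep k
  have hmoved : ∀ i ∈ S, log (1 + ε) ≤ |logRatio (x k) (x 0) i| := fun i hi =>
    log_one_add_le_abs_log (by linarith) (div_pos (hpos k i) (hpos 0 i))
      ((mem_filter.1 hi).2.imp (lt_div_iff₀ (hpos 0 i)).2 (div_lt_iff₀ (hpos 0 i)).2)
  calc #S * log (1 + ε) ≤ √(#S : ℝ) * ‖logRatio (x k) (x 0)‖ :=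
        card_mul_le_sqrt_card_mul_norm _ S hmoved
    _ ≤ √((#S : ℝ) + 1) * (k * (2 * C)) :=
        mul_le_mul (sqrt_le_sqrt (by linarith)) hdrift (norm_nonneg _) (sqrt_nonneg _)
    _ = 2 * √((#S : ℝ) + 1) * k * C := by ring

open Classical in
theorem stmt10 (n : ℕ) (x : ℕ → Fin n → ℝ) (C : ℝ) (hC : C < 1 / 2)
    (hpos : ∀ k i, 0 < x k i)
    (h : ∀ k, Real.sqrt (∑ i, ((x (k + 1) i - x k i) / x k i) ^ 2) ≤ C)
    (ε : ℝ) (hε : 0 < ε) (hε1 : ε < 1) (k : ℕ) :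
    (Finset.univ.filter
        (fun i => x k i > (1 + ε) * x 0 i ∨ x k i < (1 - ε) * x 0 i)).card *
        Real.log (1 + ε) ≤
      2 * Real.sqrt ((Finset.univ.filter
        (fun i => x k i > (1 + ε) * x 0 i ∨ x k i < (1 - ε) * x 0 i)).card + 1) *
        k * C :=
  stmt10_general n x C hC hpos h ε hε k
end

section
/- Let λ > 0 and t > 0, and let μ, μ̃ ∈ ℝ^n with all entries positive satisfy ‖(μ̃ − μ)/t‖_∞ ≤ c for some c ≥ 0. Then ‖∇Φ_λ(μ/t − 1) − ∇Φ_λ(μ̃/t − 1)‖₂ ≤ (λ√n + ‖∇Φ_λ(μ̃/t − 1)‖₂)(e^{λc} − 1), where Φ_λ(x) = Σ_i cosh(λ x_i) and ∇Φ_λ(x)_i = λ sinh(λ x_i). -/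
open Finset Real

/-! Writing `λ μ/t − λ = a + b` with `a = λ(μ̃/t − 1)` and `|b| ≤ λc`, the addition formula gives
`|sinh (a + b) − sinh a| ≤ cosh a · (e^{λc} − 1)` coordinatewise. Taking ℓ² norms leaves
`‖λ cosh a‖₂`, which `cosh² = 1 + sinh²` bounds by `λ√n + ‖λ sinh a‖₂`. -/

lemma Real.abs_sinh_le_cosh (x : ℝ) : |sinh x| ≤ cosh x := by
  rw [abs_sinh, ← cosh_abs]
  exact (sinh_lt_cosh _).le

lemma Real.abs_sinh_add_sub_sinh_le (a b : ℝ) :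
    |sinh (a + b) - sinh a| ≤ cosh a * (exp |b| - 1) := by
  have hcosh : 0 ≤ cosh b - 1 := by linarith [one_le_cosh b]
  calc |sinh (a + b) - sinh a| = |sinh a * (cosh b - 1) + cosh a * sinh b| := by
        rw [sinh_add]; ring_nf
    _ ≤ |sinh a| * (cosh b - 1) + cosh a * |sinh b| := by
        refine (abs_add_le _ _).trans_eq ?_
        rw [abs_mul, abs_mul, abs_of_nonneg hcosh, abs_of_pos (cosh_pos a)]
    _ ≤ cosh a * (cosh b - 1) + cosh a * |sinh b| := by
        gcongr
        exact abs_sinh_le_cosh a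
    _ = cosh a * (exp |b| - 1) := by
        rw [← cosh_add_sinh, cosh_abs, ← abs_sinh]; ring

lemma Real.sqrt_add_le_sqrt_add_sqrt {a b : ℝ} (ha : 0 ≤ a) (hb : 0 ≤ b) :
    √(a + b) ≤ √a + √b := by
  rw [sqrt_le_left (by positivity)]
  nlinarith [sq_sqrt ha, sq_sqrt hb, sqrt_nonneg a, sqrt_nonneg b]

lemma Real.sqrt_sum_sq_le_of_abs_le_mul {ι : Type*} [Fintype ι] {f g : ι → ℝ} {K : ℝ}
    (hK : 0 ≤ K) (hfg : ∀ i, |f i| ≤ g i * K) :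
    √(∑ i, f i ^ 2) ≤ √(∑ i, g i ^ 2) * K := by
  rw [← sqrt_sq hK, ← sqrt_mul (sum_nonneg fun i _ => sq_nonneg _), sum_mul]
  gcongr with i
  rw [← mul_pow, ← sq_abs]
  gcongr
  exact hfg i

lemma Real.sqrt_sum_sq_mul_cosh_le {ι : Type*} [Fintype ι] {lam : ℝ} (hlam : 0 ≤ lam)
    (x : ι → ℝ) :
    √(∑ i, (lam * cosh (x i)) ^ 2) ≤
      lam * √(Fintype.card ι) + √(∑ i, (lam * sinh (x i)) ^ 2) := by
  have hsplit : ∑ i, (lam * cosh (x i)) ^ 2 =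
      lam ^ 2 * Fintype.card ι + ∑ i, (lam * sinh (x i)) ^ 2 := by
    simp only [mul_pow, cosh_sq', mul_add, mul_one, sum_add_distrib, sum_const, card_univ,
      nsmul_eq_mul]
    ring
  have hconst : lam * √(Fintype.card ι) = √(lam ^ 2 * Fintype.card ι) := by
    rw [sqrt_mul (sq_nonneg _), sqrt_sq hlam]
  rw [hsplit, hconst]
  exact sqrt_add_le_sqrt_add_sqrt (by positivity) (sum_nonneg fun i _ => sq_nonneg _)

lemma abs_mul_sinh_mul_sub_mul_sinh_mul_le {lam δ x y : ℝ} (hlam : 0 ≤ lam)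
    (hxy : |x - y| ≤ δ) :
    |lam * sinh (lam * x) - lam * sinh (lam * y)| ≤
      lam * cosh (lam * y) * (exp (lam * δ) - 1) := by
  have hshift : |lam * (x - y)| ≤ lam * δ := by
    rw [abs_mul, abs_of_nonneg hlam]
    gcongr
  calc |lam * sinh (lam * x) - lam * sinh (lam * y)|
      = lam * |sinh (lam * y + lam * (x - y)) - sinh (lam * y)| := by
        rw [← mul_sub, abs_mul, abs_of_nonneg hlam]; ring_nf
    _ ≤ lam * (cosh (lam * y) * (exp |lam * (x - y)| - 1)) := by
        gcongr
        exact abs_sinh_add_sub_sinh_le _ _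
    _ ≤ lam * cosh (lam * y) * (exp (lam * δ) - 1) := by
        rw [← mul_assoc]
        gcongr

theorem stmt15_general (n : ℕ) (lam t c : ℝ) (hlam : 0 < lam) (hc : 0 ≤ c)
    (μ μt : Fin n → ℝ)
    (h : ∀ i, |(μt i - μ i) / t| ≤ c) :
    Real.sqrt (∑ i,
        (lam * Real.sinh (lam * (μ i / t - 1)) - lam * Real.sinh (lam * (μt i / t - 1))) ^ 2) ≤
      (lam * Real.sqrt n +
          Real.sqrt (∑ i, (lam * Real.sinh (lam * (μt i / t - 1))) ^ 2)) *
        (Real.exp (lam * c) - 1) := by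
  have hK : 0 ≤ exp (lam * c) - 1 := by linarith [one_le_exp (mul_nonneg hlam.le hc)]
  have hgrad : ∀ i, |lam * sinh (lam * (μ i / t - 1)) - lam * sinh (lam * (μt i / t - 1))|
      ≤ lam * cosh (lam * (μt i / t - 1)) * (exp (lam * c) - 1) := fun i =>
    abs_mul_sinh_mul_sub_mul_sinh_mul_le hlam.le <| by
      rw [← abs_neg]; convert h i using 2; ring
  calc _ ≤ √(∑ i, (lam * cosh (lam * (μt i / t - 1))) ^ 2) * (exp (lam * c) - 1) :=
        sqrt_sum_sq_le_of_abs_le_mul hK hgrad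
    _ ≤ _ := by
        gcongr
        simpa only [Fintype.card_fin] using
          sqrt_sum_sq_mul_cosh_le hlam.le fun i : Fin n => lam * (μt i / t - 1)

theorem stmt15 (n : ℕ) (lam t c : ℝ) (hlam : 0 < lam) (ht : 0 < t) (hc : 0 ≤ c)
    (μ μt : Fin n → ℝ) (hμ : ∀ i, 0 < μ i) (hμt : ∀ i, 0 < μt i)
    (h : ∀ i, |(μt i - μ i) / t| ≤ c) :
    Real.sqrt (∑ i,
        (lam * Real.sinh (lam * (μ i / t - 1)) - lam * Real.sinh (lam * (μt i / t - 1))) ^ 2) ≤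
      (lam * Real.sqrt n +
          Real.sqrt (∑ i, (lam * Real.sinh (lam * (μt i / t - 1))) ^ 2)) *
        (Real.exp (lam * c) - 1) :=
  stmt15_general n lam t c hlam hc μ μt h
end
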